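/- arXiv:1702.06556 — 4 statements merged into one kernel-verified Lean document; each statement's English description precedes it below -/
import Mathlib

section
/- Suppose g : 2^ℕ → ℕ has N as a modulus of uniform continuity on Cantor space, i.e. for all f, h ∈ 2^ℕ, f̄N = h̄N implies g(f) = g(h). Let M = max over σ ∈ 2^N of g(σ⌢0^∞). Then for every γ ∈ 2^ℕ, the point β = (γ̄M)⌢0^∞ satisfies γ̄g(β) = β̄g(β); consequently the finite family of cylinders { C_{β̄ g(β)} : β = τ⌢0^∞, τ ∈ 2^M } covers 2^ℕ. -/
/-! Because `N` is a modulus, `g f` equals `g` of the zero-padded restriction of `f` to length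
`N`, so `M` bounds `g` everywhere. Hence `g β ≤ M`, and `β = (γ̄M)⌢0^∞` agrees with `γ` below
`g β`. -/

/-- The finite binary string `σ` followed by infinitely many zeros. -/
def extFin {N : ℕ} (σ : Fin N → Bool) : ℕ → Bool :=
  fun i => if h : i < N then σ ⟨i, h⟩ else false

theorem extFin_of_lt {N : ℕ} (σ : Fin N → Bool) {i : ℕ} (hi : i < N) :
    extFin σ i = σ ⟨i, hi⟩ :=
  dif_pos hi

theorem extFin_restrict_of_lt (f : ℕ → Bool) {N i : ℕ} (hi : i < N) :
    extFin (fun j : Fin N => f j) i = f i :=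
  extFin_of_lt _ hi

theorem le_sup_extFin_of_modulus {α : Type*} [SemilatticeSup α] [OrderBot α]
    (g : (ℕ → Bool) → α) {N : ℕ} (hN : ∀ f h : ℕ → Bool, (∀ m < N, f m = h m) → g f = g h)
    (f : ℕ → Bool) :
    g f ≤ Finset.univ.sup fun σ : Fin N → Bool => g (extFin σ) := by
  have hf : g f = g (extFin fun i : Fin N => f i) :=
    hN _ _ fun m hm => (extFin_restrict_of_lt f hm).symm
  exact hf ▸ Finset.le_sup (f := fun σ : Fin N → Bool => g (extFin σ)) (Finset.mem_univ _)

/-- A modulus of uniform continuity for `g` yields an explicit finite cover of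
Cantor space: for each `γ`, the point `β = (γ̄M)⌢0^∞` satisfies
`γ̄g(β) = β̄g(β)`, and the cylinders from strings of length `M` padded with
zeros cover Cantor space. -/
theorem cover_from_modulus (g : (ℕ → Bool) → ℕ) (N : ℕ)
    (hN : ∀ f h : ℕ → Bool, (∀ m < N, f m = h m) → g f = g h)
    (M : ℕ) (hM : M = Finset.univ.sup fun σ : Fin N → Bool => g (extFin σ)) :
    (∀ γ : ℕ → Bool, ∀ m < g (extFin fun i : Fin M => γ i.1),
        γ m = extFin (fun i : Fin M => γ i.1) m) ∧
    (∀ γ : ℕ → Bool, ∃ τ : Fin M → Bool, ∀ m < g (extFin τ), γ m = extFin τ m) := by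
  have agree : ∀ γ : ℕ → Bool, ∀ m < g (extFin fun i : Fin M => γ i.1),
      γ m = extFin (fun i : Fin M => γ i.1) m := by
    intro γ m hm
    have hmM : m < M := hM ▸ hm.trans_le (le_sup_extFin_of_modulus g hN _)
    exact (extFin_restrict_of_lt γ hmM).symm
  exact ⟨agree, fun γ => ⟨fun i => γ i, agree γ⟩⟩
end

section
/- If (fₙ)_{n∈ℕ} is a sequence in 2^ℕ that is nondecreasing in the lexicographic order, then it converges pointwise: for every x ∈ ℕ the sequence n ↦ fₙ(x) is eventually constant. -/
/-!
Once the coordinates below `x` have stopped changing, the first-difference property of the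
lexicographic order makes coordinate `x` a nondecreasing sequence of booleans, which therefore
stabilises too.
-/

/-- Strict lexicographic order on Cantor space. -/
def lexLt (f g : ℕ → Bool) : Prop :=
  ∃ n, (∀ m < n, f m = g m) ∧ f n = false ∧ g n = true

/-- Lexicographic order on Cantor space. -/
def lexLe (f g : ℕ → Bool) : Prop := f = g ∨ lexLt f g

theorem lexLe.apply_le_of_forall_lt_eq {f g : ℕ → Bool} {x : ℕ} (hfg : lexLe f g)
    (hlt : ∀ y < x, f y = g y) : f x ≤ g x := by
  rcases hfg with rfl | ⟨k, hk, hfk, hgk⟩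
  · exact le_rfl
  rcases lt_trichotomy k x with hkx | rfl | hxk
  · exact absurd (hlt k hkx) (by simp [hfk, hgk])
  · simp [hfk]
  · exact (hk x hxk).le

theorem exists_forall_ge_forall_lt_eq_of_lexLe (f : ℕ → ℕ → Bool)
    (hmono : ∀ m n : ℕ, m ≤ n → lexLe (f m) (f n)) (x : ℕ) :
    ∃ N, ∀ n ≥ N, ∀ y < x, f n y = f N y := by
  induction x with
  | zero => exact ⟨0, fun _ _ y hy => absurd hy y.not_lt_zero⟩
  | succ x ih =>
  obtain ⟨N, hN⟩ := ih
  have hx_mono : Monotone fun n => f (N + n) x := fun m n hmn =>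
    (hmono _ _ (Nat.add_le_add_left hmn N)).apply_le_of_forall_lt_eq fun y hy => by
      rw [hN _ (Nat.le_add_right N m) y hy, hN _ (Nat.le_add_right N n) y hy]
  obtain ⟨M, hM⟩ := WellFoundedGT.monotone_chain_condition ⟨_, hx_mono⟩
  refine ⟨N + M, fun n hn y hy => ?_⟩
  obtain ⟨k, rfl⟩ := Nat.exists_eq_add_of_le (le_trans (Nat.le_add_right N M) hn)
  rcases Nat.lt_succ_iff_lt_or_eq.mp hy with hyx | rfl
  · rw [hN _ (Nat.le_add_right N k) y hyx, hN _ (Nat.le_add_right N M) y hyx]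
  · exact (hM k (Nat.le_of_add_le_add_left hn)).symm

/-- A lexicographically nondecreasing sequence in Cantor space converges
pointwise: each coordinate is eventually constant. -/
theorem lex_monotone_pointwise_convergent (f : ℕ → ℕ → Bool)
    (hmono : ∀ m n : ℕ, m ≤ n → lexLe (f m) (f n)) :
    ∀ x : ℕ, ∃ N : ℕ, ∀ n ≥ N, f n x = f N x := fun x =>
  (exists_forall_ge_forall_lt_eq_of_lexLe f hmono (x + 1)).imp fun _ hN n hn =>
    hN n hn x x.lt_succ_self
end

section
/- Fix h : 2^ℕ → ℕ and an ordinal λ, and suppose (f_α)_{α<λ} is a sequence in 2^ℕ such that for each α < λ the set 2^ℕ ∖ ⋃_{β<α} C_{f̄_β h(f_β)} is nonempty and f_α is its lexicographically least element. Then (f_α)_{α<λ} is strictly increasing in the lexicographic order, and consequently λ is a countable ordinal. -/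
/-- The initial segment `f̄n` of `g`. -/
def initialSegment (g : ℕ → Bool) (n : ℕ) : List Bool :=
  (List.range n).map g

theorem initialSegment_eq_iff {g g' : ℕ → Bool} {n n' : ℕ} :
    initialSegment g n = initialSegment g' n' ↔ n = n' ∧ ∀ m < n, g m = g' m := by
  refine ⟨fun heq => ?_, ?_⟩
  · have hn : n = n' := by simpa [initialSegment] using congrArg List.length heq
    subst hn
    refine ⟨rfl, fun m hm => ?_⟩
    simpa [initialSegment, hm] using congrArg (·[m]?) heq
  · rintro ⟨rfl, hagree⟩
    exact List.map_congr_left fun m hm => hagree m (List.mem_range.1 hm)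

theorem Ordinal.card_le_aleph0_of_lt_imp_ne {β : Type*} [Countable β] {o : Ordinal}
    (e : Ordinal → β) (he : ∀ α γ, α < γ → γ < o → e α ≠ e γ) : o.card ≤ Cardinal.aleph0 := by
  have hinj : Function.Injective ((Set.Iio o).domRestrict e) :=
    Function.Injective.of_lt_imp_ne fun α γ hαγ => he α γ hαγ γ.2
  rw [← Cardinal.lift_le, ← Cardinal.mk_Iio_ordinal, Cardinal.lift_aleph0]
  have : Countable (Set.Iio o) := hinj.countable
  exact Cardinal.mk_le_aleph0

/-- The greedy transfinite construction of a cover of Cantor space: if at each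
stage `α < λ` the point `f α` is the lexicographically least point not covered
by the earlier cylinders `C_{f̄_β h(f_β)}`, then the sequence is strictly
increasing in the lexicographic order and `λ` is a countable ordinal. -/
theorem greedy_cover_terminates (h : (ℕ → Bool) → ℕ) (lam : Ordinal)
    (f : Ordinal → ℕ → Bool)
    (hf : ∀ α < lam,
      (∀ β < α, ¬ (∀ m < h (f β), f α m = f β m)) ∧
      (∀ g : ℕ → Bool, (∀ β < α, ¬ (∀ m < h (f β), g m = f β m)) → lexLe (f α) g)) :
    (∀ α β : Ordinal, α < β → β < lam → lexLt (f α) (f β)) ∧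
    lam.card ≤ Cardinal.aleph0 := by
  have avoids : ∀ α β, α < β → β < lam → ¬ ∀ m < h (f α), f β m = f α m :=
    fun α β hαβ hβ => (hf β hβ).1 α hαβ
  refine ⟨fun α β hαβ hβ => ?_, ?_⟩
  · have hle : lexLe (f α) (f β) :=
      (hf α (hαβ.trans hβ)).2 (f β) fun γ hγ => avoids γ β (hγ.trans hαβ) hβ
    exact hle.resolve_left fun heq => avoids α β hαβ hβ fun m _ => by rw [heq]
  · refine Ordinal.card_le_aleph0_of_lt_imp_ne (fun α => initialSegment (f α) (h (f α)))
      fun α β hαβ hβ heq => avoids α β hαβ hβ fun m hm => ?_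
    exact ((initialSegment_eq_iff.1 heq).2 m hm).symm
end

section
/- Let F : 2^ℕ → ℕ be Borel measurable, let m be the uniform measure on 2^ℕ, and let ν be the product measure on (2^ℕ)^ℕ of countably many copies of m. Then for ν-almost every sequence (f_j)_{j∈ℕ}, the union ⋃_j C_{f̄_j F(f_j)} has m-measure 1. -/
/-!
Call `x` covered by `f` when `x ∈ C_{f̄ F(f)}`. The pieces `{f | F f = n, f̄ n = σ}` form a
countable partition, and the piece containing `x` consists of sequences covering `x`. Hence the
`x` covered by a null set of `f` lie in the union of the null pieces, so almost every `x` is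
covered by a set of positive measure `p`. An i.i.d. sequence misses such a set among its first
`N` terms with probability `(1 - p) ^ N`, so it hits it almost surely, and Fubini exchanges the
two "almost every" quantifiers.
-/

open MeasureTheory

/-- The cylinder of all infinite binary sequences extending the finite string `s`. -/
def cylL (s : List Bool) : Set (ℕ → Bool) := {h | ∀ m < s.length, h m = s.getD m false}

open Set

theorem prob_eq_one_of_mem_ae {X : Type*} [MeasurableSpace X] {μ : Measure X}
    [IsProbabilityMeasure μ] {s : Set X} (hs : s ∈ ae μ) : μ s = 1 :=
  (measure_congr (Filter.eventuallyEq_univ.2 hs)).trans measure_univ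

theorem ae_measure_ne_zero_of_mem_countable {X ι : Type*} [MeasurableSpace X] [Countable ι]
    (μ : Measure X) (S : ι → Set X) (i : X → ι) (hi : ∀ x, x ∈ S (i x)) :
    ∀ᵐ x ∂μ, μ (S (i x)) ≠ 0 :=
  measure_mono_null (fun x hx => mem_biUnion (show μ (S (i x)) = 0 from not_not.1 hx) (hi x))
    ((measure_biUnion_null_iff (to_countable {j | μ (S j) = 0})).2 fun _ hj => hj)

section Covering

variable {α : Type*}

/-- `(f, x) ∈ coverRel F` says that `x` lies in the cylinder `C_{f̄ F(f)}`. -/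
def coverRel (F : (ℕ → α) → ℕ) : Set ((ℕ → α) × (ℕ → α)) :=
  {q | ∀ k < F q.1, q.2 k = q.1 k}

theorem measurableSet_coverRel [MeasurableSpace α] [MeasurableEq α] {F : (ℕ → α) → ℕ}
    (hF : Measurable F) : MeasurableSet (coverRel F) := by
  unfold coverRel
  measurability

theorem ae_measure_coverRel_ne_zero [MeasurableSpace α] [Countable α] (F : (ℕ → α) → ℕ)
    (m : Measure (ℕ → α)) : ∀ᵐ x ∂m, m {f | (f, x) ∈ coverRel F} ≠ 0 := by
  filter_upwards [ae_measure_ne_zero_of_mem_countable m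
    (fun p : Σ n, Fin n → α => {f | F f = p.1 ∧ ∀ k : Fin p.1, f k = p.2 k})
    (fun x => ⟨F x, fun k => x k⟩) fun x => ⟨rfl, fun _ => rfl⟩] with x hx h0
  refine hx (measure_mono_null ?_ h0)
  rintro f ⟨hFf, hf⟩ k hk
  exact (hf ⟨k, hFf ▸ hk⟩).symm

end Covering

/-- `ν` is the product of countably many copies of `μ`, as determined by its values on
cylinders. -/
def HasIIDCoordinates {β : Type*} [MeasurableSpace β] (ν : Measure (ℕ → β))
    (μ : Measure β) : Prop :=
  ∀ (n : ℕ) (A : Fin n → Set β), (∀ i, MeasurableSet (A i)) →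
    ν {x | ∀ i : Fin n, x i ∈ A i} = ∏ i, μ (A i)

namespace HasIIDCoordinates

variable {β : Type*} [MeasurableSpace β] {μ : Measure β} {ν : Measure (ℕ → β)}

theorem isProbabilityMeasure (hν : HasIIDCoordinates ν μ) : IsProbabilityMeasure ν :=
  ⟨by simpa using hν 0 (fun _ => ∅) finZeroElim⟩

theorem isProbabilityMeasure_law (hν : HasIIDCoordinates ν μ) : IsProbabilityMeasure μ := by
  have := hν.isProbabilityMeasure
  exact ⟨by simpa using (hν 1 (fun _ => univ) fun _ => MeasurableSet.univ).symm⟩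

theorem measure_forall_mem_eq_zero (hν : HasIIDCoordinates ν μ) {A : Set β}
    (hA : MeasurableSet A) (hμA : μ A < 1) : ν {ys | ∀ j, ys j ∈ A} = 0 := by
  refine nonpos_iff_eq_zero.1 <|
    ge_of_tendsto' (ENNReal.tendsto_pow_atTop_nhds_zero_of_lt_one hμA) fun N => ?_
  calc ν {ys | ∀ j, ys j ∈ A} ≤ ν {ys | ∀ i : Fin N, ys i ∈ A} :=
        measure_mono fun _ h i => h i
    _ = μ A ^ N := by simp [hν N (fun _ => A) fun _ => hA]

theorem ae_ae_exists_mem (hν : HasIIDCoordinates ν μ) {X : Type*} [MeasurableSpace X]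
    {m : Measure X} [SFinite m] {R : Set (β × X)} (hR : MeasurableSet R)
    (hpos : ∀ᵐ x ∂m, μ {y | (y, x) ∈ R} ≠ 0) :
    ∀ᵐ ys ∂ν, ∀ᵐ x ∂m, ∃ j, (ys j, x) ∈ R := by
  have := hν.isProbabilityMeasure
  have := hν.isProbabilityMeasure_law
  set Bad : Set ((ℕ → β) × X) := {p | ∀ j, (p.1 j, p.2) ∉ R} with hBad_def
  have hBad : MeasurableSet Bad := by
    rw [hBad_def, ofPred_forall]
    exact MeasurableSet.iInter fun j => (hR.preimage (by fun_prop)).compl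
  have hsection : ∀ᵐ x ∂m, ν ((·, x) ⁻¹' Bad) = 0 := by
    filter_upwards [hpos] with x hx
    have hRx : MeasurableSet {y | (y, x) ∈ R} := hR.preimage measurable_prodMk_right
    refine hν.measure_forall_mem_eq_zero hRx.compl ?_
    rw [prob_compl_eq_one_sub hRx]
    exact ENNReal.sub_lt_self ENNReal.one_ne_top one_ne_zero hx
  have hprod : ν.prod m Bad = 0 := by
    rw [Measure.prod_apply_symm hBad, lintegral_congr_ae hsection, lintegral_zero]
  filter_upwards [(Measure.measure_prod_null hBad).1 hprod] with ys hys
  rw [ae_iff]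
  simpa [Bad] using hys

end HasIIDCoordinates

theorem ae_sequence_suffices_general (F : (ℕ → Bool) → ℕ) (hF : Measurable F)
    (m : Measure (ℕ → Bool))
    (ν : Measure (ℕ → ℕ → Bool))
    (hν : ∀ (n : ℕ) (A : Fin n → Set (ℕ → Bool)), (∀ i, MeasurableSet (A i)) →
      ν {x | ∀ i : Fin n, x i ∈ A i} = ∏ i, m (A i)) :
    ν {fs : ℕ → ℕ → Bool |
        m (⋃ j : ℕ, {h : ℕ → Bool | ∀ k < F (fs j), h k = fs j k}) = 1} = 1 := by
  have hiid : HasIIDCoordinates ν m := hν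
  have := hiid.isProbabilityMeasure
  have := hiid.isProbabilityMeasure_law
  have hcover :=
    hiid.ae_ae_exists_mem (measurableSet_coverRel hF) (ae_measure_coverRel_ne_zero F m)
  refine prob_eq_one_of_mem_ae ?_
  filter_upwards [hcover] with fs hfs
  refine prob_eq_one_of_mem_ae ?_
  filter_upwards [hfs] with x hx
  simpa [coverRel] using hx

/-- For a Borel `F : 2^ℕ → ℕ`, almost every sequence `(f_j)` (with respect to the
product `ν` of countably many copies of the uniform measure `m`) suffices for
`F`: the union of the cylinders `C_{f̄_j F(f_j)}` has full measure. -/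
theorem ae_sequence_suffices (F : (ℕ → Bool) → ℕ) (hF : Measurable F)
    (m : Measure (ℕ → Bool))
    (hm : ∀ s : List Bool, m (cylL s) = ((2 : ENNReal) ^ s.length)⁻¹)
    (ν : Measure (ℕ → ℕ → Bool))
    (hν : ∀ (n : ℕ) (A : Fin n → Set (ℕ → Bool)), (∀ i, MeasurableSet (A i)) →
      ν {x | ∀ i : Fin n, x i ∈ A i} = ∏ i, m (A i)) :
    ν {fs : ℕ → ℕ → Bool |
        m (⋃ j : ℕ, {h : ℕ → Bool | ∀ k < F (fs j), h k = fs j k}) = 1} = 1 :=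
  ae_sequence_suffices_general F hF m ν hν
end
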